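/- For every integer k ≥ 2 and every finite simple graph G with maximum degree Δ, f_k(G) ≤ (k − 1)·Δ. -/
import Mathlib


open Finset

variable {V : Type*}

open scoped Classical in
/-- Degree of `v` in the subgraph of `G` induced on the vertex set `A`
(number of neighbours of `v` inside `A`). -/
noncomputable def degOn (G : SimpleGraph V) (A : Finset V) (v : V) : ℕ :=
  (A.filter fun w => G.Adj v w).card

/-- Maximum degree of the subgraph of `G` induced on `A`. -/
noncomputable def maxDegOn (G : SimpleGraph V) (A : Finset V) : ℕ :=
  A.sup (degOn G A)

open scoped Classical in
/-- The subgraph of `G` induced on `A` has fewer than `k` vertices or at least `k`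
vertices realising its maximum degree. -/
def equates (G : SimpleGraph V) (k : ℕ) (A : Finset V) : Prop :=
  A.card < k ∨ k ≤ (A.filter fun v => degOn G A v = maxDegOn G A).card

open scoped Classical in
/-- `f_k` of the subgraph of `G` induced on `A`: the minimum number of vertices of `A`
whose deletion leaves an induced subgraph with fewer than `k` vertices or with at
least `k` vertices realising its maximum degree. -/
noncomputable def fkOn (G : SimpleGraph V) (k : ℕ) (A : Finset V) : ℕ :=
  sInf {m | ∃ S, S ⊆ A ∧ S.card = m ∧ equates G k (A \ S)}

/-- `f_k(G)`. -/
noncomputable def fk [Fintype V] (G : SimpleGraph V) (k : ℕ) : ℕ :=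
  fkOn G k Finset.univ

/-- `diff` of the subgraph of `G` induced on `A`: the largest degree minus the
second-largest degree (with multiplicity) of this subgraph. -/
noncomputable def diffOn (G : SimpleGraph V) (A : Finset V) : ℕ :=
  maxDegOn G A - ((A.val.map (degOn G A)).erase (maxDegOn G A)).sup

/-- `diff(G) = d₁ - d₂`, the difference between the largest and second-largest
vertex degrees of `G`. -/
noncomputable def diffDeg [Fintype V] (G : SimpleGraph V) : ℕ :=
  diffOn G Finset.univ

open scoped Classical in
lemma degOn_mono (G : SimpleGraph V) {A B : Finset V} (h : A ⊆ B) (v : V) :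
    degOn G A v ≤ degOn G B v := by
  unfold degOn
  exact Finset.card_le_card (Finset.filter_subset_filter _ h)

open scoped Classical in
lemma key (G : SimpleGraph V) (k : ℕ) (hk : 2 ≤ k) :
    ∀ n (A : Finset V), maxDegOn G A ≤ n →
      ∃ S, S ⊆ A ∧ S.card ≤ (k - 1) * n ∧ equates G k (A \ S) := by
  intro n
  induction n with
  | zero =>
    intro A hA
    refine ⟨∅, Finset.empty_subset _, by simp, ?_⟩
    rw [Finset.sdiff_empty]
    by_cases hc : A.card < k
    · exact Or.inl hc
    · right
      have : A.filter (fun v => degOn G A v = maxDegOn G A) = A := by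
        apply Finset.filter_true_of_mem
        intro v hv
        have h1 : degOn G A v ≤ maxDegOn G A := Finset.le_sup hv
        omega
      rw [this]
      omega
  | succ n ih =>
    intro A hA
    by_cases hle : maxDegOn G A ≤ n
    · obtain ⟨S, hS, hcard, heq⟩ := ih A hle
      exact ⟨S, hS, le_trans hcard (Nat.mul_le_mul_left _ (Nat.le_succ n)), heq⟩
    · set M := A.filter (fun v => degOn G A v = maxDegOn G A) with hM
      by_cases hk2 : k ≤ M.card
      · exact ⟨∅, Finset.empty_subset _, by simp, by rw [Finset.sdiff_empty]; exact Or.inr hk2⟩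
      · have hMc : M.card ≤ k - 1 := by omega
        have hA' : maxDegOn G (A \ M) ≤ n := by
          apply Finset.sup_le
          intro v hv
          have hvA : v ∈ A := (Finset.mem_sdiff.mp hv).1
          have hvM : v ∉ M := (Finset.mem_sdiff.mp hv).2
          have h1 : degOn G (A \ M) v ≤ degOn G A v :=
            degOn_mono G (Finset.sdiff_subset) v
          have h2 : degOn G A v ≤ maxDegOn G A := Finset.le_sup hvA
          have h3 : degOn G A v ≠ maxDegOn G A := by
            intro h
            exact hvM (Finset.mem_filter.mpr ⟨hvA, h⟩)
          omega
        obtain ⟨S', hS', hcard', heq'⟩ := ih (A \ M) hA'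
        refine ⟨M ∪ S', ?_, ?_, ?_⟩
        · apply Finset.union_subset (Finset.filter_subset _ _)
          exact hS'.trans (Finset.sdiff_subset)
        · calc (M ∪ S').card ≤ M.card + S'.card := Finset.card_union_le _ _
            _ ≤ (k - 1) + (k - 1) * n := Nat.add_le_add hMc hcard'
            _ = (k - 1) * (n + 1) := by ring
        · have : A \ (M ∪ S') = (A \ M) \ S' := by
            ext x; simp [Finset.mem_sdiff]; tauto
          rw [this]
          exact heq'

/-- For every `k ≥ 2` and every finite simple graph `G` with maximum
degree `Δ`, `f_k(G) ≤ (k - 1) · Δ`. -/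
theorem stmt12 {V : Type*} [Fintype V] (G : SimpleGraph V) (k : ℕ) (hk : 2 ≤ k) :
    fk G k ≤ (k - 1) * maxDegOn G Finset.univ := by
  obtain ⟨S, hS, hcard, heq⟩ := key G k hk (maxDegOn G Finset.univ) Finset.univ le_rfl
  have : fk G k ≤ S.card := Nat.sInf_le ⟨S, hS, rfl, heq⟩
  calc fk G k ≤ S.card := this
    _ ≤ (k - 1) * maxDegOn G Finset.univ := hcard
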